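/- arXiv:2407.21044 — 4 statements merged into one kernel-verified Lean document; each statement's English description precedes it below -/
import Mathlib

section
/- Let 𝔤 be a finite-dimensional real Lie algebra with inner product ⟨·,·⟩, X ∈ 𝔤 nonzero with ‖X‖ < 1, and g_X(v,z) = (⟨v,z⟩ + ⟨X,v⟩⟨X,z⟩/‖X‖)(1+‖X‖). Then the conditions (a) ⟨X,[y,z]⟩ = 0 and ⟨[y,X],z⟩ + ⟨[z,X],y⟩ = 0 for all y,z hold if and only if the conditions (b) g_X(X,[y,z]) = 0 and g_X([y,X],z) + g_X([z,X],y) = 0 for all y,z hold. -/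
/-!
Since `⟪X, X⟫ / ‖X‖ = ‖X‖`, the form `g_X` restricted to `X` in its first slot is
`(1 + ‖X‖)² ⟪X, ·⟫`, so the first conditions of (a) and (b) agree. Under them every `[y, X]` is
orthogonal to `X`, where `g_X([y, X], ·) = (1 + ‖X‖) ⟪[y, X], ·⟫`, so the second conditions
differ only by the positive factor `1 + ‖X‖`.
-/

open RealInnerProductSpace

section RandersInner

variable {E : Type*} [NormedAddCommGroup E] [InnerProductSpace ℝ E]

noncomputable def randersInner (X v z : E) : ℝ :=
  (⟪v, z⟫ + ⟪X, v⟫ * ⟪X, z⟫ / ‖X‖) * (1 + ‖X‖)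

theorem randersInner_self_left (X w : E) :
    randersInner X X w = (1 + ‖X‖) ^ 2 * ⟪X, w⟫ := by
  rcases eq_or_ne X 0 with rfl | hX
  · simp [randersInner]
  · have hX' : ‖X‖ ≠ 0 := norm_ne_zero_iff.mpr hX
    rw [randersInner, real_inner_self_eq_norm_sq]
    field_simp

theorem randersInner_self_left_eq_zero_iff (X w : E) :
    randersInner X X w = 0 ↔ ⟪X, w⟫ = 0 := by
  rw [randersInner_self_left]
  exact mul_eq_zero_iff_left (by positivity)

theorem randersInner_of_inner_left_eq_zero {X v : E} (h : ⟪X, v⟫ = 0) (z : E) :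
    randersInner X v z = (1 + ‖X‖) * ⟪v, z⟫ := by
  rw [randersInner, h]
  ring

end RandersInner

theorem stmt_8_general {g : Type*} [LieRing g]
    [NormedAddCommGroup g] [InnerProductSpace ℝ g]
    (X : g)
    (gX : g → g → ℝ)
    (hgX : ∀ v z, gX v z = (⟪v, z⟫ + ⟪X, v⟫ * ⟪X, z⟫ / ‖X‖) * (1 + ‖X‖)) :
    ((∀ y z : g, ⟪X, ⁅y, z⁆⟫ = 0) ∧
      (∀ y z : g, ⟪⁅y, X⁆, z⟫ + ⟪⁅z, X⁆, y⟫ = 0)) ↔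
    ((∀ y z : g, gX X ⁅y, z⁆ = 0) ∧
      (∀ y z : g, gX ⁅y, X⁆ z + gX ⁅z, X⁆ y = 0)) := by
  obtain rfl : gX = randersInner X := funext fun v => funext (hgX v)
  simp only [randersInner_self_left_eq_zero_iff]
  refine and_congr_right fun hX => forall₂_congr fun y z => ?_
  rw [randersInner_of_inner_left_eq_zero (hX y X), randersInner_of_inner_left_eq_zero (hX z X),
    ← mul_add]
  exact (mul_eq_zero_iff_left (by positivity)).symm

theorem stmt_8 {g : Type*} [LieRing g] [LieAlgebra ℝ g]
    [NormedAddCommGroup g] [InnerProductSpace ℝ g] [FiniteDimensional ℝ g]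
    (X : g) (hX : X ≠ 0) (hX1 : ‖X‖ < 1)
    (gX : g → g → ℝ)
    (hgX : ∀ v z, gX v z = (⟪v, z⟫ + ⟪X, v⟫ * ⟪X, z⟫ / ‖X‖) * (1 + ‖X‖)) :
    ((∀ y z : g, ⟪X, ⁅y, z⁆⟫ = 0) ∧
      (∀ y z : g, ⟪⁅y, X⁆, z⟫ + ⟪⁅z, X⁆, y⟫ = 0)) ↔
    ((∀ y z : g, gX X ⁅y, z⁆ = 0) ∧
      (∀ y z : g, gX ⁅y, X⁆ z + gX ⁅z, X⁆ y = 0)) :=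
  stmt_8_general X gX hgX
end

section
/- Let 𝔤 be a finite-dimensional real Lie algebra with inner product ⟨·,·⟩, X ∈ 𝔤 nonzero with ‖X‖ < 1, and g_X as above. Suppose v ∈ 𝔤 satisfies ⟨v,[v,y]⟩ = 0 for all y ∈ 𝔤 (v is a geodesic vector for ⟨·,·⟩). Then g_X(v,[v,y]) = 0 for all y ∈ 𝔤 if and only if ad_v* X = 0 or ⟨X,v⟩ = 0, where ad_v* is the adjoint of ad_v with respect to ⟨·,·⟩. -/
open RealInnerProductSpace

theorem inner_add_inner_mul_inner_div_norm_mul_eq_zero_iff {E : Type*}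
    [NormedAddCommGroup E] [InnerProductSpace ℝ E] (X u z : E) (huz : ⟪u, z⟫ = 0) :
    (⟪u, z⟫ + ⟪X, u⟫ * ⟪X, z⟫ / ‖X‖) * (1 + ‖X‖) = 0 ↔ ⟪X, u⟫ = 0 ∨ ⟪X, z⟫ = 0 := by
  have hne : (1 + ‖X‖) ≠ 0 := by positivity
  rw [huz, zero_add, mul_eq_zero, or_iff_left hne, div_eq_zero_iff, mul_eq_zero,
    norm_eq_zero, or_iff_left_of_imp]
  -- `‖X‖ = 0` makes the division junk, but then `X = 0` kills `⟪X, u⟫` as well.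
  rintro rfl
  exact Or.inl (inner_zero_left u)

theorem stmt_9_general {g : Type*} [LieRing g]
    [NormedAddCommGroup g] [InnerProductSpace ℝ g]
    (X : g)
    (gX : g → g → ℝ)
    (hgX : ∀ v z, gX v z = (⟪v, z⟫ + ⟪X, v⟫ * ⟪X, z⟫ / ‖X‖) * (1 + ‖X‖))
    (v : g) (hgeo : ∀ y : g, ⟪v, ⁅v, y⁆⟫ = 0) :
    (∀ y : g, gX v ⁅v, y⁆ = 0) ↔
      ((∀ y : g, ⟪X, ⁅v, y⁆⟫ = 0) ∨ ⟪X, v⟫ = 0) := by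
  simp only [hgX, fun y => inner_add_inner_mul_inner_div_norm_mul_eq_zero_iff X v _ (hgeo y)]
  rw [forall_or_left, or_comm]

theorem stmt_9 {g : Type*} [LieRing g] [LieAlgebra ℝ g]
    [NormedAddCommGroup g] [InnerProductSpace ℝ g] [FiniteDimensional ℝ g]
    (X : g) (hX : X ≠ 0) (hX1 : ‖X‖ < 1)
    (gX : g → g → ℝ)
    (hgX : ∀ v z, gX v z = (⟪v, z⟫ + ⟪X, v⟫ * ⟪X, z⟫ / ‖X‖) * (1 + ‖X‖))
    (v : g) (hgeo : ∀ y : g, ⟪v, ⁅v, y⁆⟫ = 0) :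
    (∀ y : g, gX v ⁅v, y⁆ = 0) ↔
      ((∀ y : g, ⟪X, ⁅v, y⁆⟫ = 0) ∨ ⟪X, v⟫ = 0) :=
  stmt_9_general X gX hgX v hgeo
end

section
/- Let 𝔤 be a finite-dimensional real Lie algebra with inner product ⟨·,·⟩, X ∈ 𝔤 nonzero with ‖X‖ < 1, and g_X as above. Suppose v ∈ 𝔤 satisfies ⟨[v,y],z⟩ + ⟨y,[v,z]⟩ = 0 for all y,z ∈ 𝔤 (v is a Killing vector for ⟨·,·⟩). Then g_X([v,y],z) + g_X(y,[v,z]) = 0 for all y,z ∈ 𝔤 if and only if ⟨X,[v,y]⟩ = 0 for all y ∈ 𝔤. -/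
open RealInnerProductSpace

-- Testing against `z = X` suffices, because `⟪X, D X⟫ = 0`.
theorem inner_mul_inner_skew_iff {E : Type*} [NormedAddCommGroup E] [InnerProductSpace ℝ E]
    (D : E → E) (X : E) (hDX : ⟪X, D X⟫ = 0) :
    (∀ y z, ⟪X, D y⟫ * ⟪X, z⟫ + ⟪X, y⟫ * ⟪X, D z⟫ = 0) ↔ ∀ y, ⟪X, D y⟫ = 0 := by
  refine ⟨fun h y => ?_, fun h y z => by simp [h]⟩
  have hy : ⟪X, D y⟫ * ⟪X, X⟫ = 0 := by simpa [hDX] using h y X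
  rcases mul_eq_zero.1 hy with hy | hXX
  · exact hy
  · simp [inner_self_eq_zero.1 hXX]

theorem inner_bracket_self_eq_zero_of_skew {g : Type*} [LieRing g] [NormedAddCommGroup g]
    [InnerProductSpace ℝ g] {v : g} (hkill : ∀ y z : g, ⟪⁅v, y⁆, z⟫ + ⟪y, ⁅v, z⁆⟫ = 0) (X : g) :
    ⟪X, ⁅v, X⁆⟫ = 0 := by
  have h := hkill X X
  rw [real_inner_comm] at h
  linarith

theorem stmt_10_general {g : Type*} [LieRing g]
    [NormedAddCommGroup g] [InnerProductSpace ℝ g]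
    (X : g)
    (gX : g → g → ℝ)
    (hgX : ∀ v z, gX v z = (⟪v, z⟫ + ⟪X, v⟫ * ⟪X, z⟫ / ‖X‖) * (1 + ‖X‖))
    (v : g) (hkill : ∀ y z : g, ⟪⁅v, y⁆, z⟫ + ⟪y, ⁅v, z⁆⟫ = 0) :
    (∀ y z : g, gX ⁅v, y⁆ z + gX y ⁅v, z⁆ = 0) ↔
      (∀ y : g, ⟪X, ⁅v, y⁆⟫ = 0) := by
  -- the Killing property removes the `⟪·, ·⟫` part of `gX`, leaving its rank-one part
  have hrank : ∀ y z, gX ⁅v, y⁆ z + gX y ⁅v, z⁆ =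
      (⟪X, ⁅v, y⁆⟫ * ⟪X, z⟫ + ⟪X, y⟫ * ⟪X, ⁅v, z⁆⟫) / ‖X‖ * (1 + ‖X‖) := fun y z => by
    rw [hgX, hgX]
    linear_combination (1 + ‖X‖) * hkill y z
  have hscale : ∀ y z, gX ⁅v, y⁆ z + gX y ⁅v, z⁆ = 0 ↔
      ⟪X, ⁅v, y⁆⟫ * ⟪X, z⟫ + ⟪X, y⟫ * ⟪X, ⁅v, z⁆⟫ = 0 := fun y z => by
    rw [hrank, mul_eq_zero, div_eq_zero_iff, or_iff_left (by positivity)]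
    refine ⟨fun h => h.elim id fun hX => ?_, Or.inl⟩
    simp [norm_eq_zero.1 hX]
  simp only [hscale]
  exact inner_mul_inner_skew_iff (fun y => ⁅v, y⁆) X (inner_bracket_self_eq_zero_of_skew hkill X)

theorem stmt_10 {g : Type*} [LieRing g] [LieAlgebra ℝ g]
    [NormedAddCommGroup g] [InnerProductSpace ℝ g] [FiniteDimensional ℝ g]
    (X : g) (hX : X ≠ 0) (hX1 : ‖X‖ < 1)
    (gX : g → g → ℝ)
    (hgX : ∀ v z, gX v z = (⟪v, z⟫ + ⟪X, v⟫ * ⟪X, z⟫ / ‖X‖) * (1 + ‖X‖))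
    (v : g) (hkill : ∀ y z : g, ⟪⁅v, y⁆, z⟫ + ⟪y, ⁅v, z⁆⟫ = 0) :
    (∀ y z : g, gX ⁅v, y⁆ z + gX y ⁅v, z⁆ = 0) ↔
      (∀ y : g, ⟪X, ⁅v, y⁆⟫ = 0) :=
  stmt_10_general X gX hgX v hkill
end

section
/- Let 𝔤 be a finite-dimensional real Lie algebra with inner product ⟨·,·⟩, X ∈ 𝔤 nonzero with ‖X‖ < 1. Assume ⟨X,[y,z]⟩ = 0 and ⟨[y,X],z⟩ + ⟨[z,X],y⟩ = 0 for all y,z ∈ 𝔤 (Berwald conditions). Then the Levi-Civita connection of g_X coincides with the Levi-Civita connection of ⟨·,·⟩: for all y,z ∈ 𝔤, ∇_y z = ∇̄_y z, where both are defined by the respective Koszul formulas. -/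
/-!
Berwald's first condition makes `g_X` agree with `(1 + ‖X‖) ⟪·, ·⟫` whenever one argument is a
bracket, so comparing the two Koszul formulas gives `g_X (∇_y z) w = (1 + ‖X‖) ⟪∇̄_y z, w⟫`.
Berwald's second condition says that `a ↦ ⁅a, X⁆` is skew-adjoint; together with the skew-symmetry of
the bracket this forces `∇̄_y z ⊥ X`. Since `g_X (v, ·)` and `(1 + ‖X‖) ⟪v, ·⟫` differ only by a
multiple of `⟪X, v⟫`, and `g_X (v, X)` determines `⟪X, v⟫`, the two connections coincide.
-/

open RealInnerProductSpace

section InnerProductSpace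

variable {g : Type*} [NormedAddCommGroup g] [InnerProductSpace ℝ g]

theorem eq_of_forall_inner_add_inner_mul_inner_div_norm_eq {X u v : g} (hu : ⟪u, X⟫ = 0)
    (h : ∀ w, ⟪v, w⟫ + ⟪X, v⟫ * ⟪X, w⟫ / ‖X‖ = ⟪u, w⟫) : v = u := by
  have hvX : ⟪X, v⟫ = 0 := by
    have hX := h X
    rw [real_inner_comm X v, hu, real_inner_self_eq_norm_mul_norm, mul_div_assoc,
      mul_self_div_self] at hX
    have : ⟪X, v⟫ * (1 + ‖X‖) = 0 := by linarith
    exact (mul_eq_zero.mp this).resolve_right (by positivity)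
  refine ext_inner_right ℝ fun w => ?_
  simpa [hvX] using h w

theorem exists_forall_inner_eq_inner_sub_mul_inner (x y : g) (r : ℝ) :
    ∃ c : g, ∀ a, ⟪c, a⟫ = ⟪x, a⟫ - r * ⟪y, a⟫ :=
  ⟨x - r • y, fun a => by rw [inner_sub_left, real_inner_smul_left]⟩

end InnerProductSpace

section LieAlgebra

variable {g : Type*} [NormedAddCommGroup g] [InnerProductSpace ℝ g] [LieRing g] [LieAlgebra ℝ g]

/- The additive structures of `LieRing g` and `NormedAddCommGroup g` are unrelated, so the
skew-symmetry `⁅X, a⁆ = -⁅a, X⁆` says nothing about inner products by itself. Representability of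
`a ↦ ⟪⁅a, X⁆, w⟫` and `a ↦ ⟪⁅X, a⁆, w⟫` bridges the gap: for the inner-product sum `u` of `a` and
its Lie negative, both functionals show `⁅u, X⁆ = ⁅X, u⁆`, hence `⁅u, X⁆ = 0`. -/
theorem inner_lie_add_inner_lie_swap_eq_inner_zero {X : g}
    (hleft : ∀ w, ∃ c : g, ∀ a, ⟪⁅a, X⁆, w⟫ = ⟪c, a⟫)
    (hright : ∀ w, ∃ c : g, ∀ a, ⟪⁅X, a⁆, w⟫ = ⟪c, a⟫) (a w : g) :
    ⟪⁅a, X⁆, w⟫ + ⟪⁅X, a⁆, w⟫ = ⟪(0 : g), w⟫ := by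
  choose c hc using hleft
  choose d hd using hright
  obtain ⟨u, hu⟩ : ∃ u : g, ∀ e : g, ⟪e, u⟫ = ⟪e, a⟫ + ⟪e, -a⟫ :=
    ⟨_, fun e => inner_add_right e a (-a)⟩
  have hneg_left : ⁅-a, X⁆ = ⁅X, a⁆ := by rw [neg_lie, lie_skew]
  have hneg_right : ⁅X, -a⁆ = ⁅a, X⁆ := by rw [lie_neg, lie_skew]
  have hu_left : ∀ t, ⟪⁅u, X⁆, t⟫ = ⟪⁅a, X⁆, t⟫ + ⟪⁅X, a⁆, t⟫ := fun t => by
    rw [hc, hu, ← hc, ← hc, hneg_left]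
  have hu_comm : ⁅u, X⁆ = ⁅X, u⁆ := ext_inner_right ℝ fun t => by
    rw [hu_left, hd t u, hu, ← hd, ← hd, hneg_right, add_comm]
  have hu_zero : ⁅u, X⁆ = 0 := by
    have : IsAddTorsionFree g := .of_isTorsionFree ℝ g
    exact self_eq_neg.mp (hu_comm.trans (lie_skew X u).symm)
  rw [← hu_left, hu_zero]

theorem inner_lie_swap {X : g}
    (hleft : ∀ w, ∃ c : g, ∀ a, ⟪⁅a, X⁆, w⟫ = ⟪c, a⟫)
    (hright : ∀ w, ∃ c : g, ∀ a, ⟪⁅X, a⁆, w⟫ = ⟪c, a⟫) (a w : g) :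
    ⟪⁅X, a⁆, w⟫ = -⟪⁅a, X⁆, w⟫ := by
  have hzero := inner_lie_add_inner_lie_swap_eq_inner_zero hleft hright 0 w
  rw [zero_lie, lie_zero] at hzero
  linarith [inner_lie_add_inner_lie_swap_eq_inner_zero hleft hright a w]

end LieAlgebra

theorem stmt_14_general {g : Type*} [LieRing g] [LieAlgebra ℝ g]
    [NormedAddCommGroup g] [InnerProductSpace ℝ g]
    (X : g)
    (hBerwald1 : ∀ y z : g, ⟪X, ⁅y, z⁆⟫ = 0)
    (hBerwald2 : ∀ y z : g, ⟪⁅y, X⁆, z⟫ + ⟪⁅z, X⁆, y⟫ = 0)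
    (gX : g → g → ℝ)
    (hgX : ∀ v z, gX v z = (⟪v, z⟫ + ⟪X, v⟫ * ⟪X, z⟫ / ‖X‖) * (1 + ‖X‖))
    (nablaBar : g → g → g)
    (hKoszulBar : ∀ y z w : g,
      ⟪nablaBar y z, w⟫ =
        (1 / 2) * (⟪⁅y, z⁆, w⟫ - ⟪⁅z, w⁆, y⟫ + ⟪⁅w, y⁆, z⟫))
    (nabla : g → g → g)
    (hKoszul : ∀ y z w : g,
      gX (nabla y z) w =
        (1 / 2) * (gX ⁅y, z⁆ w - gX ⁅z, w⁆ y + gX ⁅w, y⁆ z)) :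
    ∀ y z : g, nabla y z = nablaBar y z := by
  intro y z
  have hKoszulBar_X : ∀ a w, ⟪⁅X, a⁆, w⟫ = ⟪⁅w, X⁆, a⟫ - 2 * ⟪nablaBar w X, a⟫ := fun a w => by
    linarith [hKoszulBar w X a, real_inner_comm X ⁅a, w⁆, hBerwald1 a w]
  -- the witness `_` is `-⁅w, X⁆` for the negation of the inner product space, not the Lie one
  have hswap : ∀ a w, ⟪⁅X, a⁆, w⟫ = -⟪⁅a, X⁆, w⟫ := inner_lie_swap
    (fun w => ⟨_, fun a =>
      (eq_neg_of_add_eq_zero_left (hBerwald2 a w)).trans (inner_neg_left _ a).symm⟩)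
    (fun w => (exists_forall_inner_eq_inner_sub_mul_inner ⁅w, X⁆ (nablaBar w X) 2).imp
      fun _ hc a => (hKoszulBar_X a w).trans (hc a).symm)
  have hbarX : ⟪nablaBar y z, X⟫ = 0 := by
    rw [hKoszulBar, real_inner_comm, hBerwald1, hswap]
    linarith [hBerwald2 y z]
  have hgX_lie : ∀ a b w, gX ⁅a, b⁆ w = ⟪⁅a, b⁆, w⟫ * (1 + ‖X‖) := fun a b w => by
    rw [hgX, hBerwald1]
    ring
  refine eq_of_forall_inner_add_inner_mul_inner_div_norm_eq hbarX fun w => ?_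
  have hK : gX (nabla y z) w = ⟪nablaBar y z, w⟫ * (1 + ‖X‖) := by
    rw [hKoszul, hgX_lie, hgX_lie, hgX_lie, hKoszulBar]
    ring
  rw [hgX] at hK
  exact mul_right_cancel₀ (by positivity) hK

theorem stmt_14 {g : Type*} [LieRing g] [LieAlgebra ℝ g]
    [NormedAddCommGroup g] [InnerProductSpace ℝ g] [FiniteDimensional ℝ g]
    (X : g) (hX : X ≠ 0) (hX1 : ‖X‖ < 1)
    (hBerwald1 : ∀ y z : g, ⟪X, ⁅y, z⁆⟫ = 0)
    (hBerwald2 : ∀ y z : g, ⟪⁅y, X⁆, z⟫ + ⟪⁅z, X⁆, y⟫ = 0)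
    (gX : g → g → ℝ)
    (hgX : ∀ v z, gX v z = (⟪v, z⟫ + ⟪X, v⟫ * ⟪X, z⟫ / ‖X‖) * (1 + ‖X‖))
    (nablaBar : g → g → g)
    (hKoszulBar : ∀ y z w : g,
      ⟪nablaBar y z, w⟫ =
        (1 / 2) * (⟪⁅y, z⁆, w⟫ - ⟪⁅z, w⁆, y⟫ + ⟪⁅w, y⁆, z⟫))
    (nabla : g → g → g)
    (hKoszul : ∀ y z w : g,
      gX (nabla y z) w =
        (1 / 2) * (gX ⁅y, z⁆ w - gX ⁅z, w⁆ y + gX ⁅w, y⁆ z)) :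
    ∀ y z : g, nabla y z = nablaBar y z :=
  stmt_14_general X hBerwald1 hBerwald2 gX hgX nablaBar hKoszulBar nabla hKoszul
end
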